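/- arXiv:math/0602410 — 2 statements merged into one kernel-verified Lean document; each statement's English description precedes it below -/
import Mathlib

section
/- Let m ≥ 2 be an integer and c a real constant with |c| ≤ m−1. Define u : (0,∞) → ℝ by u(r) = (∫₀^r (sinh t)^(m-1) dt) / (sinh r)^(m-1). Then |c·u(r)| < 1 for all r > 0, and the function w(r) = c·u(r)/√(1 − c²·u(r)²) is differentiable and satisfies w'(r) = c·(1 + w(r)²)^(3/2) − (m−1)·coth(r)·w(r)·(1 + w(r)²) for all r > 0. -/
/-! With `k = m - 1` and `I r = ∫₀^r sinh^k`, the comparison of integrands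
`k sinh^k < (sinh^k)' = k sinh^(k-1) cosh` on `(0, r]` gives `k I r < sinh^k r`, i.e.
`0 < u < 1/k`, whence `|c u| < 1`. The quotient rule gives `u' = 1 - k coth · u`, and
`f x = x / √(1 - x²)` satisfies `f' = (1 - x²)^(-3/2) = (1 + f²)^(3/2)`; the chain rule for
`w = f (c u)` then yields the equation, since `c u (1 + w²)^(3/2) = w (1 + w²)`. -/

open Real

noncomputable def sinhPowIntegralRatio (k : ℕ) (r : ℝ) : ℝ :=
  (∫ t in (0:ℝ)..r, sinh t ^ k) / sinh r ^ k

lemma integral_sinh_pow_pos (k : ℕ) {r : ℝ} (hr : 0 < r) : 0 < ∫ t in (0:ℝ)..r, sinh t ^ k :=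
  intervalIntegral.intervalIntegral_pos_of_pos_on
    ((continuous_sinh.pow k).intervalIntegrable 0 r)
    (fun _ ht => pow_pos (sinh_pos_iff.2 ht.1) k) hr

lemma mul_integral_sinh_pow_lt {k : ℕ} (hk : k ≠ 0) {r : ℝ} (hr : 0 < r) :
    k * (∫ t in (0:ℝ)..r, sinh t ^ k) < sinh r ^ k := by
  have hderiv : ∀ x, HasDerivAt (fun t => sinh t ^ k) (k * sinh x ^ (k - 1) * cosh x) x :=
    fun x => (hasDerivAt_sinh x).pow k
  have hftc : ∫ t in (0:ℝ)..r, k * sinh t ^ (k - 1) * cosh t = sinh r ^ k := by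
    rw [intervalIntegral.integral_eq_sub_of_hasDerivAt (fun x _ => hderiv x)
      ((by fun_prop : Continuous _).intervalIntegrable _ _), sinh_zero, zero_pow hk, sub_zero]
  rw [← intervalIntegral.integral_const_mul, ← hftc, ← sub_pos,
    ← intervalIntegral.integral_sub ((by fun_prop : Continuous _).intervalIntegrable _ _)
      ((by fun_prop : Continuous _).intervalIntegrable _ _)]
  refine intervalIntegral.intervalIntegral_pos_of_pos_on
    ((by fun_prop : Continuous _).intervalIntegrable _ _) (fun t ht => ?_) hr
  have hsinh : 0 < sinh t := sinh_pos_iff.2 ht.1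
  have hk' : (0 : ℝ) < k := by exact_mod_cast Nat.pos_of_ne_zero hk
  rw [← pow_sub_one_mul hk]
  have := mul_pos (mul_pos hk' (pow_pos hsinh (k - 1))) (sub_pos.2 (sinh_lt_cosh t))
  linarith

namespace sinhPowIntegralRatio

lemma pos (k : ℕ) {r : ℝ} (hr : 0 < r) : 0 < sinhPowIntegralRatio k r :=
  div_pos (integral_sinh_pow_pos k hr) (pow_pos (sinh_pos_iff.2 hr) k)

lemma mul_lt_one {k : ℕ} (hk : k ≠ 0) {r : ℝ} (hr : 0 < r) :
    k * sinhPowIntegralRatio k r < 1 := by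
  rw [sinhPowIntegralRatio, ← mul_div_assoc, div_lt_one (pow_pos (sinh_pos_iff.2 hr) k)]
  exact mul_integral_sinh_pow_lt hk hr

lemma hasDerivAt (k : ℕ) {r : ℝ} (hr : r ≠ 0) :
    HasDerivAt (sinhPowIntegralRatio k)
      (1 - k * (cosh r / sinh r) * sinhPowIntegralRatio k r) r := by
  have hsinh : sinh r ≠ 0 := sinh_ne_zero.2 hr
  have hcont : Continuous fun t => sinh t ^ k := continuous_sinh.pow k
  have hnum := intervalIntegral.integral_hasDerivAt_right (hcont.intervalIntegrable 0 r)
    (hcont.stronglyMeasurableAtFilter _ _) hcont.continuousAt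
  refine (hnum.div ((hasDerivAt_sinh r).pow k) (pow_ne_zero k hsinh)).congr_deriv ?_
  simp only [sinhPowIntegralRatio, Pi.pow_apply]
  rcases k with _ | k
  · simp
  · rw [Nat.add_sub_cancel, pow_succ]
    field_simp

end sinhPowIntegralRatio

lemma one_sub_sq_pos_of_abs_lt_one {x : ℝ} (hx : |x| < 1) : 0 < 1 - x ^ 2 :=
  sub_pos.2 ((sq_lt_one_iff_abs_lt_one x).2 hx)

lemma sq_rpow_three_halves {y : ℝ} (hy : 0 ≤ y) : (y ^ 2) ^ (3 / 2 : ℝ) = y ^ 3 := by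
  rw [← rpow_natCast, ← rpow_mul hy]
  norm_num

lemma one_add_sq_div_sqrt_one_sub_sq {x : ℝ} (hx : |x| < 1) :
    1 + (x / √(1 - x ^ 2)) ^ 2 = (√(1 - x ^ 2))⁻¹ ^ 2 := by
  have hpos := one_sub_sq_pos_of_abs_lt_one hx
  rw [div_pow, inv_pow, sq_sqrt hpos.le]
  field_simp
  ring

lemma hasDerivAt_div_sqrt_one_sub_sq {x : ℝ} (hx : |x| < 1) :
    HasDerivAt (fun y => y / √(1 - y ^ 2)) ((√(1 - x ^ 2))⁻¹ ^ 3) x := by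
  have hpos := one_sub_sq_pos_of_abs_lt_one hx
  have hsqrt := ((hasDerivAt_pow 2 x).const_sub 1).sqrt hpos.ne'
  refine ((hasDerivAt_id' x).div hsqrt (sqrt_pos.2 hpos).ne').congr_deriv ?_
  have hs : √(1 - x ^ 2) ^ 2 = 1 - x ^ 2 := sq_sqrt hpos.le
  field_simp
  norm_num [hs]
  ring

/-- For `m ≥ 2` and `|c| ≤ m-1`, with
`u r = (∫₀^r (sinh t)^(m-1) dt)/(sinh r)^(m-1)`, one has `|c · u r| < 1` for all
`r > 0`, and `w = c u/√(1 - c²u²)` is differentiable and satisfies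
`w' = c (1+w²)^{3/2} - (m-1) coth r · w (1+w²)` on `(0,∞)`. -/
theorem stmt_8 (m : ℕ) (hm : 2 ≤ m) (c : ℝ) (hc : |c| ≤ (m : ℝ) - 1)
    (u : ℝ → ℝ)
    (hu : ∀ r : ℝ, u r =
      (∫ t in (0:ℝ)..r, Real.sinh t ^ (m - 1)) / Real.sinh r ^ (m - 1))
    (w : ℝ → ℝ)
    (hw : ∀ r : ℝ, w r = c * u r / Real.sqrt (1 - c ^ 2 * u r ^ 2)) :
    ∀ r : ℝ, 0 < r → |c * u r| < 1 ∧
      HasDerivAt w (c * (1 + w r ^ 2) ^ ((3:ℝ)/2)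
        - ((m : ℝ) - 1) * (Real.cosh r / Real.sinh r) * w r * (1 + w r ^ 2)) r := by
  intro r hr
  have hk : m - 1 ≠ 0 := by omega
  have hcast : ((m - 1 : ℕ) : ℝ) = m - 1 := by push_cast [Nat.one_le_of_lt hm]; ring
  have hu_eq : u = sinhPowIntegralRatio (m - 1) := funext hu
  have hw_eq : w = (fun y => y / √(1 - y ^ 2)) ∘ (fun x => c * u x) := by
    funext x; simp [hw, mul_pow]
  subst hu_eq
  have hbound : |c * sinhPowIntegralRatio (m - 1) r| < 1 := by
    have hpos := sinhPowIntegralRatio.pos (m - 1) hr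
    rw [abs_mul, abs_of_pos hpos]
    calc |c| * _ ≤ ((m : ℝ) - 1) * _ := mul_le_mul_of_nonneg_right hc hpos.le
      _ < 1 := hcast ▸ sinhPowIntegralRatio.mul_lt_one hk hr
  refine ⟨hbound, ?_⟩
  rw [hw_eq]
  refine ((hasDerivAt_div_sqrt_one_sub_sq hbound).comp r
    ((sinhPowIntegralRatio.hasDerivAt (m - 1) hr.ne').const_mul c)).congr_deriv ?_
  simp only [Function.comp_apply, one_add_sq_div_sqrt_one_sub_sq hbound,
    sq_rpow_three_halves (inv_nonneg.2 (sqrt_nonneg _)), hcast]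
  have hs : 0 < √(1 - (c * sinhPowIntegralRatio (m - 1) r) ^ 2) :=
    sqrt_pos.2 (one_sub_sq_pos_of_abs_lt_one hbound)
  field_simp
end

section
/- Let m ≥ 2 be an integer and c any real constant. Define u : (0,∞) → ℝ by u(r) = (∫₀^r (sinh t)^(m-1) dt) / (sinh r)^(m-1). Then the function w(r) = c·u(r)/√(1 + c²·u(r)²) satisfies |w(r)| < 1 for all r > 0, is differentiable, and satisfies w'(r) = c·(1 − w(r)²)^(3/2) − (m−1)·coth(r)·w(r)·(1 − w(r)²) for all r > 0. -/
/-!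
Since `(u sinh^(m-1))' = sinh^(m-1)`, `u` solves the linear equation
`u' = 1 - (m - 1) coth r · u`. The map `x ↦ x / √(1 + x²)` sends `ℝ` into `(-1, 1)`, satisfies
`1 - (x / √(1 + x²))² = 1 / (1 + x²)`, and has derivative `(1 + x²)^(-3/2)`. Composing it with
`c u` turns the linear equation for `u` into the stated equation for `w`.
-/

open Real

theorem Real.rpow_three_halves {a : ℝ} (ha : 0 ≤ a) : a ^ (3 / 2 : ℝ) = a * √a := by
  rw [show (3 / 2 : ℝ) = 1 + 1 / 2 by norm_num, rpow_add' ha (by norm_num), rpow_one,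
    sqrt_eq_rpow]

section DivSqrtOneAddSq

variable (x : ℝ)

theorem one_sub_sq_div_sqrt_one_add_sq : 1 - (x / √(1 + x ^ 2)) ^ 2 = (1 + x ^ 2)⁻¹ := by
  have hq : 0 < 1 + x ^ 2 := by positivity
  rw [div_pow, sq_sqrt hq.le]
  field_simp
  ring

theorem abs_div_sqrt_one_add_sq_lt_one : |x / √(1 + x ^ 2)| < 1 := by
  rw [← sq_lt_one_iff_abs_lt_one, ← sub_pos, one_sub_sq_div_sqrt_one_add_sq]
  positivity

theorem one_sub_sq_div_sqrt_one_add_sq_rpow_three_halves :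
    (1 - (x / √(1 + x ^ 2)) ^ 2) ^ (3 / 2 : ℝ) = (1 + x ^ 2)⁻¹ / √(1 + x ^ 2) := by
  rw [one_sub_sq_div_sqrt_one_add_sq, rpow_three_halves (by positivity), sqrt_inv, div_eq_mul_inv]

theorem hasDerivAt_div_sqrt_one_add_sq :
    HasDerivAt (fun y => y / √(1 + y ^ 2)) ((1 - (x / √(1 + x ^ 2)) ^ 2) ^ (3 / 2 : ℝ)) x := by
  have hq : 0 < 1 + x ^ 2 := by positivity
  have hs : 0 < √(1 + x ^ 2) := sqrt_pos.2 hq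
  have hsqrt : HasDerivAt (fun y => √(1 + y ^ 2)) (2 * x / (2 * √(1 + x ^ 2))) x := by
    simpa using ((hasDerivAt_pow 2 x).const_add 1).sqrt hq.ne'
  refine ((hasDerivAt_id' x).div hsqrt hs.ne').congr_deriv ?_
  rw [one_sub_sq_div_sqrt_one_add_sq_rpow_three_halves]
  field_simp
  rw [sq_sqrt hq.le]
  ring

end DivSqrtOneAddSq

theorem hasDerivAt_integral_div_self {g : ℝ → ℝ} {g' r : ℝ} (hg : Continuous g)
    (hg' : HasDerivAt g g' r) (hr : g r ≠ 0) :
    HasDerivAt (fun x => (∫ t in (0 : ℝ)..x, g t) / g x)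
      (1 - g' / g r * ((∫ t in (0 : ℝ)..r, g t) / g r)) r := by
  refine ((hg.integral_hasStrictDerivAt 0 r).hasDerivAt.div hg' hr).congr_deriv ?_
  field_simp

theorem hasDerivAt_integral_sinh_pow_div (k : ℕ) {r : ℝ} (hr : r ≠ 0) :
    HasDerivAt (fun x => (∫ t in (0 : ℝ)..x, sinh t ^ k) / sinh x ^ k)
      (1 - k * (cosh r / sinh r) * ((∫ t in (0 : ℝ)..r, sinh t ^ k) / sinh r ^ k)) r := by
  have hs : sinh r ≠ 0 := sinh_ne_zero.2 hr
  refine (hasDerivAt_integral_div_self (g := fun t => sinh t ^ k) (continuous_sinh.pow k)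
    ((hasDerivAt_sinh r).fun_pow k) (pow_ne_zero k hs)).congr_deriv ?_
  rcases k with _ | k
  · simp
  · rw [Nat.add_sub_cancel]
    field_simp
    ring

/-- For `m ≥ 2` and any real `c`, with
`u r = (∫₀^r (sinh t)^(m-1) dt)/(sinh r)^(m-1)`, the function
`w = c u/√(1 + c²u²)` satisfies `|w| < 1` on `(0,∞)`, is differentiable there,
and satisfies `w' = c (1-w²)^{3/2} - (m-1) coth r · w (1-w²)`. -/
theorem stmt_9 (m : ℕ) (hm : 2 ≤ m) (c : ℝ)
    (u : ℝ → ℝ)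
    (hu : ∀ r : ℝ, u r =
      (∫ t in (0:ℝ)..r, Real.sinh t ^ (m - 1)) / Real.sinh r ^ (m - 1))
    (w : ℝ → ℝ)
    (hw : ∀ r : ℝ, w r = c * u r / Real.sqrt (1 + c ^ 2 * u r ^ 2)) :
    ∀ r : ℝ, 0 < r → |w r| < 1 ∧
      HasDerivAt w (c * (1 - w r ^ 2) ^ ((3:ℝ)/2)
        - ((m : ℝ) - 1) * (Real.cosh r / Real.sinh r) * w r * (1 - w r ^ 2)) r := by
  intro r hr
  have hw_comp : w = (fun y => y / √(1 + y ^ 2)) ∘ (fun x => c * u x) := by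
    funext x
    simp only [hw, Function.comp, mul_pow]
  have hu' : HasDerivAt u (1 - ((m : ℝ) - 1) * (cosh r / sinh r) * u r) r := by
    have hm1 : (((m - 1 : ℕ) : ℝ)) = (m : ℝ) - 1 := by
      rw [Nat.cast_sub (by omega), Nat.cast_one]
    simpa only [← hu, hm1] using hasDerivAt_integral_sinh_pow_div (m - 1) hr.ne'
  have hw_r : w r = c * u r / √(1 + (c * u r) ^ 2) := by rw [hw, mul_pow]
  refine ⟨hw_r ▸ abs_div_sqrt_one_add_sq_lt_one _, ?_⟩
  have hw' := (hasDerivAt_div_sqrt_one_add_sq (c * u r)).comp r (hu'.const_mul c)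
  rw [← hw_comp] at hw'
  refine hw'.congr_deriv ?_
  rw [hw_r, one_sub_sq_div_sqrt_one_add_sq_rpow_three_halves, one_sub_sq_div_sqrt_one_add_sq]
  ring
end
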